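/- Let l ≥ 2 and let λ be an l-core partition with quotient charges p_i = p_i(λ), 0 ≤ i ≤ l−1 (so ∑_i p_i = 0). Then for every 0 ≤ j ≤ l−1: ∑_{k∈ℤ} N_{kl−j}(λ) = (1/2)·∑_{i=0}^{l−1} p_i² + ∑_{i=l−j}^{l−1} p_i, where the second sum is empty when j = 0. Here ∑_{k∈ℤ} N_{kl−j}(λ) equals the number of boxes of λ whose content is congruent to −j modulo l. -/

import Mathlib

/-- A partition `λ = (λ_1 ≥ λ_2 ≥ ⋯)`: a non-increasing sequence of natural numbers with
finitely many nonzero terms.  Here `parts n` denotes `λ_{n+1}`. -/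
structure Partition' where
  parts : ℕ → ℕ
  antitone : ∀ ⦃m n : ℕ⦄, m ≤ n → parts n ≤ parts m
  eventually_zero : ∃ N : ℕ, ∀ n ≥ N, parts n = 0

namespace Partition'

/-- `|λ|`, the number of boxes of the Young diagram of `λ`. -/
noncomputable def size (lam : Partition') : ℕ := ∑ᶠ n, lam.parts n

/-- The Young diagram of `λ`: boxes `(m, n)` (column `m`, row `n`) with `m < λ_{n+1}`. -/
def cells (lam : Partition') : Set (ℕ × ℕ) := {c | c.1 < lam.parts c.2}

/-- Maya diagram of `λ`: `maya lam k` holds (bead value 1) iff `k ∉ {λ_m − m : m ≥ 1}`. -/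
def maya (lam : Partition') (k : ℤ) : Prop :=
  ¬ ∃ m : ℕ, k = (lam.parts m : ℤ) - ((m : ℤ) + 1)

/-- The conjugate partition's `(m+1)`-st part: `λ'_{m+1} = #{rows of length > m}`. -/
noncomputable def conjParts (lam : Partition') (m : ℕ) : ℕ :=
  {j : ℕ | m < lam.parts j}.ncard

/-- Hook length of the box `(m, n)`: `(λ_{n+1} − 1 − m) + (λ'_{m+1} − 1 − n) + 1`. -/
noncomputable def hookLength (lam : Partition') (m n : ℕ) : ℕ :=
  (lam.parts n - 1 - m) + (lam.conjParts m - 1 - n) + 1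

end Partition'

/-- `c` is the charge of the 0/1-sequence `μ`:
`#{k < c : μ k = 1} = #{k ≥ c : μ k = 0}` (both sets finite). -/
def IsCharge (μ : ℤ → Prop) (c : ℤ) : Prop :=
  {k : ℤ | k < c ∧ μ k}.Finite ∧ {k : ℤ | c ≤ k ∧ ¬ μ k}.Finite ∧
    {k : ℤ | k < c ∧ μ k}.ncard = {k : ℤ | c ≤ k ∧ ¬ μ k}.ncard

/-- The `i`-th quotient sequence of the Maya diagram of `λ`: `μ_i(k) = μ_λ(l·k + i)`. -/
def quotSeq (l : ℕ) (lam : Partition') (i : ℕ) : ℤ → Prop :=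
  fun k => lam.maya ((l : ℤ) * k + (i : ℕ))

/-- `Q` is the `l`-quotient of `λ` with quotient charges `p`: for each `i`, `p i` is the
charge of the `i`-th quotient sequence `μ_i` and `μ_{Q i}(k) = μ_i(k + p i)`. -/
def IsQuotientWith (l : ℕ) (lam : Partition') (p : Fin l → ℤ) (Q : Fin l → Partition') : Prop :=
  ∀ i : Fin l, IsCharge (quotSeq l lam i) (p i) ∧
    ∀ k : ℤ, (Q i).maya k ↔ quotSeq l lam i (k + p i)

/-- Two boxes are adjacent if they share an edge. -/
def Adj (a b : ℕ × ℕ) : Prop :=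
  (a.1 = b.1 ∧ (a.2 = b.2 + 1 ∨ b.2 = a.2 + 1)) ∨
    (a.2 = b.2 ∧ (a.1 = b.1 + 1 ∨ b.1 = a.1 + 1))

/-- A set of boxes is connected: any two of its boxes are joined by a path of
edge-adjacent boxes inside the set. -/
def ConnectedIn (H : Set (ℕ × ℕ)) : Prop :=
  ∀ x ∈ H, ∀ y ∈ H,
    Relation.ReflTransGen (fun a b => a ∈ H ∧ b ∈ H ∧ Adj a b) x y

/-- `H` contains a 2×2 square of boxes. -/
def HasSquare (H : Set (ℕ × ℕ)) : Prop :=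
  ∃ m n : ℕ, (m, n) ∈ H ∧ (m + 1, n) ∈ H ∧ (m, n + 1) ∈ H ∧ (m + 1, n + 1) ∈ H

/-- `H` is a rim hook of length `l` of `λ`: a connected set of `l` boxes of `λ`,
containing no 2×2 square, whose removal leaves the Young diagram of a partition. -/
def IsRimHook (l : ℕ) (lam : Partition') (H : Set (ℕ × ℕ)) : Prop :=
  H ⊆ lam.cells ∧ H.Finite ∧ H.ncard = l ∧ ConnectedIn H ∧ ¬ HasSquare H ∧
    ∃ mu : Partition', mu.cells = lam.cells \ H

/-- `μ` is obtained from `λ` by removing one rim hook of length `l`. -/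
def RemoveHook (l : ℕ) (lam mu : Partition') : Prop :=
  ∃ H : Set (ℕ × ℕ), IsRimHook l lam H ∧ mu.cells = lam.cells \ H

/-- `λ` is an `l`-core: it admits no rim hook of length `l`. -/
def IsLCore (l : ℕ) (lam : Partition') : Prop := ¬ ∃ H : Set (ℕ × ℕ), IsRimHook l lam H

/-- `c` is the `l`-core of `λ`: obtained from `λ` by repeatedly removing rim hooks of
length `l` until none remain. -/
def IsCoreOf (l : ℕ) (lam c : Partition') : Prop :=
  Relation.ReflTransGen (RemoveHook l) lam c ∧ IsLCore l c

/-- Number of boxes `(m,n)` of `λ` with content `m − n ≡ r (mod l)`. -/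
noncomputable def contentCount (l : ℕ) (lam : Partition') (r : ℤ) : ℕ :=
  {c : ℕ × ℕ | c ∈ lam.cells ∧ ((c.1 : ℤ) - (c.2 : ℤ)) ≡ r [ZMOD (l : ℤ)]}.ncard

/-- `N_d(λ)`: the number of boxes `(m,n)` of `λ` with content `m − n = d`. -/
noncomputable def diagCount (lam : Partition') (d : ℤ) : ℕ :=
  {c : ℕ × ℕ | c ∈ lam.cells ∧ ((c.1 : ℤ) - (c.2 : ℤ)) = d}.ncard

/-- `K` is the blended partition of the charges `p` and the `l`-tuple of partitions `R`:
`{p + K_m − m : m ≥ 1} = {l·(R_{i,m} − m + p_i) + i : 0 ≤ i ≤ l−1, m ≥ 1}` in `ℤ`. -/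
def IsBlended (l : ℕ) (p : Fin l → ℤ) (R : Fin l → Partition') (K : Partition') : Prop :=
  {k : ℤ | ∃ m : ℕ, k = (∑ i, p i) + (K.parts m : ℤ) - ((m : ℤ) + 1)} =
    {k : ℤ | ∃ i : Fin l, ∃ m : ℕ,
      k = (l : ℤ) * (((R i).parts m : ℤ) - ((m : ℤ) + 1) + p i) + (i : ℕ)}

/-! The zeros of the Maya diagram of `λ` sit at the beta numbers `β_n = λ_{n+1} − (n+1)`.
Moving a bead from `x` to a free position `x − l` removes a rim hook of length `l`, so for an
`l`-core the set `B` of beta numbers is closed under `x ↦ x − l`; together with the charges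
this forces `B = {l q + i : q < p_i}`. Row `n` of `λ` holds one box of each content in
`[−n, β_n]`, so the number of boxes of content `d` is `#(B ∩ [d, ∞)) − #((−∞, 0) ∩ [d, ∞))`,
an explicit sum over the residues `i`. Summing over the diagonals `d = l k − j` is then a
computation with triangular numbers. -/

theorem Set.ncard_eq_sum_ncard_fiberwise {α β : Type*} {s : Set α} (hs : s.Finite)
    {f : α → β} {t : Finset β} (hf : ∀ a ∈ s, f a ∈ t) :
    s.ncard = ∑ b ∈ t, {a ∈ s | f a = b}.ncard := by
  classical
  obtain ⟨s, rfl⟩ := hs.exists_finset_coe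
  rw [Set.ncard_coe_finset, Finset.card_eq_sum_card_fiberwise hf]
  refine Finset.sum_congr rfl fun b _ => ?_
  rw [← Set.ncard_coe_finset, Finset.coe_filter]
  rfl

theorem two_mul_sum_Ico_toNat_sub {a b c : ℤ} (hac : a ≤ c) (hcb : c ≤ b) :
    2 * ∑ k ∈ Finset.Ico a b, ((c - k).toNat : ℤ) = (c - a) * (c - a + 1) := by
  rw [← Finset.Ico_union_Ico_eq_Ico hac hcb,
    Finset.sum_union (Finset.Ico_disjoint_Ico_consecutive a c b),
    Finset.sum_eq_zero (s := Finset.Ico c b) fun k hk => by rw [Finset.mem_Ico] at hk; omega,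
    add_zero]
  refine Int.leInductionDown
    (motive := fun a _ => 2 * ∑ k ∈ Finset.Ico a c, ((c - k).toNat : ℤ) = (c - a) * (c - a + 1))
    (by simp) (fun a hac ih => ?_) a hac
  rw [← Finset.insert_Ico_left_eq_Ico_sub_one hac,
    Finset.sum_insert (by simp), mul_add, ih, Int.toNat_of_nonneg (by omega)]
  ring

/-- Residue class `i` contributes the quotients `q ∈ [⌈(d - i) / l⌉, p i)`. -/
theorem ncard_inter_Ici_eq_sum_toNat {l : ℕ} (hl : 0 < l) {B : Set ℤ} {p : Fin l → ℤ}
    (hB : ∀ (i : Fin l) (q : ℤ), (l : ℤ) * q + (i : ℕ) ∈ B ↔ q < p i) (d : ℤ) :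
    (B ∩ Set.Ici d).ncard = ∑ i, (p i + ((i : ℕ) - d) / l).toNat := by
  have : NeZero l := ⟨hl.ne'⟩
  have hlow : ∀ (i : Fin l) (q : ℤ), d ≤ l * q + (i : ℕ) ↔ -(((i : ℕ) - d) / l) ≤ q :=
    fun i q => by
      rw [neg_le, Int.le_ediv_iff_mul_le (by exact_mod_cast hl)]
      constructor <;> intro <;> linarith
  have hset : B ∩ Set.Ici d = ((Finset.univ.sigma fun i : Fin l =>
      Finset.Ico (-(((i : ℕ) - d) / l)) (p i)).image fun x => (l : ℤ) * x.2 + (x.1 : ℕ) :) := by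
    ext x
    simp only [Set.mem_inter_iff, Set.mem_Ici, Finset.coe_image, Set.mem_image, Finset.mem_coe,
      Finset.mem_sigma, Finset.mem_univ, true_and, Finset.mem_Ico, Sigma.exists]
    constructor
    · rintro ⟨hxB, hdx⟩
      have hx : (l : ℤ) * (Int.divModEquiv l x).1 + ((Int.divModEquiv l x).2 : ℕ) = x := by
        conv_rhs => rw [← (Int.divModEquiv l).symm_apply_apply x, Int.divModEquiv_symm_apply]
        ring
      rw [← hx] at hxB hdx
      exact ⟨_, _, ⟨(hlow _ _).1 hdx, (hB _ _).1 hxB⟩, hx⟩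
    · rintro ⟨i, q, ⟨hq₁, hq₂⟩, rfl⟩
      exact ⟨(hB i q).2 hq₂, (hlow i q).2 hq₁⟩
  have hinj : Function.Injective fun x : (_ : Fin l) × ℤ => (l : ℤ) * x.2 + (x.1 : ℕ) := by
    rintro ⟨i, q⟩ ⟨i', q'⟩ h
    have := (Int.divModEquiv l).symm.injective (a₁ := (q, i)) (a₂ := (q', i'))
      (by simp only [Int.divModEquiv_symm_apply]; linarith)
    simp only [Prod.mk.injEq] at this
    obtain ⟨rfl, rfl⟩ := this
    rfl
  rw [hset, Set.ncard_coe_finset, Finset.card_image_of_injective _ hinj, Finset.card_sigma]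
  simp only [Int.card_Ico, sub_neg_eq_add]

theorem sub_mul_add_neg_ediv_eq {l i j : ℕ} (hi : i < l) (hj : j < l) (k : ℤ) :
    ((i : ℤ) - (l * k + -j)) / l = (if l - j ≤ i then 1 else 0) - k := by
  rw [Int.ediv_eq_iff_of_pos (by omega)]
  split_ifs with hij
  · have : (l : ℤ) ≤ i + j := by exact_mod_cast (show l ≤ i + j by omega)
    have : (i : ℤ) < l := by exact_mod_cast hi
    constructor <;> linarith
  · have : (i : ℤ) + j < l := by exact_mod_cast (show i + j < l by omega)
    constructor <;> linarith

theorem mul_add_mem_Iio_zero_iff {l : ℕ} (i : Fin l) (q : ℤ) :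
    (l : ℤ) * q + (i : ℕ) ∈ Set.Iio 0 ↔ q < 0 := by
  have : ((i : ℕ) : ℤ) < l := by exact_mod_cast i.isLt
  rw [Set.mem_Iio]
  constructor <;> intro h <;> nlinarith

theorem IsCharge.not_iff_lt {μ : ℤ → Prop} {c : ℤ} (hc : IsCharge μ c)
    (hμ : ∀ x, ¬μ x → ¬μ (x - 1)) (k : ℤ) : ¬μ k ↔ k < c := by
  obtain ⟨hfin₁, hfin₂, hcard⟩ := hc
  have hdown : ∀ x, ¬μ x → ∀ y ≤ x, ¬μ y := fun x hx y hy =>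
    Int.leInductionDown (motive := fun y _ => ¬μ y) hx (fun z _ hz => hμ z hz) y hy
  constructor
  · intro hk
    by_contra! hck
    have hempty : {x | x < c ∧ μ x} = ∅ :=
      Set.eq_empty_of_forall_notMem fun x ⟨hxc, hμx⟩ => hdown k hk x (by omega) hμx
    rw [hempty, Set.ncard_empty, eq_comm, Set.ncard_eq_zero hfin₂] at hcard
    exact hcard.subset ⟨hck, hk⟩
  · intro hk hμk
    have hempty : {x | c ≤ x ∧ ¬μ x} = ∅ :=
      Set.eq_empty_of_forall_notMem fun x ⟨hcx, hμx⟩ => hdown x hμx k (by omega) hμk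
    rw [hempty, Set.ncard_empty, Set.ncard_eq_zero hfin₁] at hcard
    exact hcard.subset ⟨hk, hμk⟩

theorem connectedIn_of_forall_reflTransGen {H : Set (ℕ × ℕ)} (z : ℕ × ℕ)
    (h : ∀ x ∈ H, Relation.ReflTransGen (fun a b => a ∈ H ∧ b ∈ H ∧ Adj a b) x z) :
    ConnectedIn H := by
  have : Std.Symm (fun a b => a ∈ H ∧ b ∈ H ∧ Adj a b) :=
    ⟨fun a b ⟨ha, hb, hab⟩ => ⟨hb, ha, by unfold Adj at hab ⊢; omega⟩⟩
  exact fun x hx y hy => (h x hx).trans (Relation.ReflTransGen.stdSymm.symm _ _ (h y hy))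

namespace Partition'

variable (lam : Partition')

def beta (n : ℕ) : ℤ := (lam.parts n : ℤ) - ((n : ℤ) + 1)

theorem beta_strictAnti : StrictAnti lam.beta := fun m n h => by
  have := lam.antitone h.le
  simp only [beta]
  omega

theorem neg_succ_le_beta (n : ℕ) : -((n : ℤ) + 1) ≤ lam.beta n := by
  simp only [beta]
  omega

theorem exists_beta_lt (x : ℤ) : ∃ n, lam.beta n < x := by
  refine ⟨(lam.parts 0 - x).toNat, ?_⟩
  have := lam.antitone (Nat.zero_le (lam.parts 0 - x).toNat)
  simp only [beta]
  omega

theorem maya_iff (k : ℤ) : lam.maya k ↔ k ∉ Set.range lam.beta := by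
  simp [maya, beta, eq_comm]

theorem exists_cells_subset_Iio_prod_Iio : ∃ N, lam.cells ⊆ Set.Iio N ×ˢ Set.Iio N := by
  obtain ⟨R, hR⟩ := lam.eventually_zero
  refine ⟨lam.parts 0 + R, ?_⟩
  rintro ⟨m, n⟩ (h : m < lam.parts n)
  have := lam.antitone (Nat.zero_le n)
  have : n < R := by
    by_contra! hn
    simp [hR n hn] at h
  simp only [Set.mem_prod, Set.mem_Iio]
  omega

theorem cells_finite : lam.cells.Finite :=
  let ⟨N, h⟩ := lam.exists_cells_subset_Iio_prod_Iio
  ((Set.finite_Iio N).prod (Set.finite_Iio N)).subset h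

/-- Row `n` carries a box of content `d` iff `-n ≤ d ≤ beta n`; the rows with `-n > d` are
exactly those with `d ≤ -(n+1)`, the beta numbers of the empty partition. -/
theorem diagCount_add_ncard_Iio_inter_Ici (d : ℤ) :
    diagCount lam d + (Set.Iio 0 ∩ Set.Ici d).ncard = (Set.range lam.beta ∩ Set.Ici d).ncard := by
  have hrange : ∀ f : ℕ → ℤ, Function.Injective f →
      (Set.range f ∩ Set.Ici d).ncard = {n | d ≤ f n}.ncard := fun f hf => by
    rw [← Set.image_preimage_eq_range_inter, Set.ncard_image_of_injective _ hf]
    rfl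
  have hIio : Set.Iio (0 : ℤ) = Set.range fun n : ℕ => -((n : ℤ) + 1) := by
    ext x
    simp only [Set.mem_Iio, Set.mem_range]
    exact ⟨fun hx => ⟨(-x - 1).toNat, by omega⟩, by rintro ⟨n, rfl⟩; omega⟩
  have hsub : {n : ℕ | d ≤ -((n : ℤ) + 1)} ⊆ {n | d ≤ lam.beta n} := fun n hn =>
    le_trans hn (lam.neg_succ_le_beta n)
  have hfin : {n : ℕ | d ≤ lam.beta n}.Finite :=
    (Set.finite_Iio (lam.parts 0 - d).toNat).subset fun n (hn : d ≤ lam.beta n) => by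
      have := lam.antitone (Nat.zero_le n)
      simp only [beta, Set.mem_Iio] at hn ⊢
      omega
  rw [hIio, hrange _ fun m n h => by simpa using h, hrange _ lam.beta_strictAnti.injective,
    ← Set.ncard_sdiff_add_ncard_of_subset hsub hfin]
  congr 1
  rw [diagCount, ← Set.InjOn.ncard_image (f := Prod.snd) fun x hx y hy h => by
    obtain ⟨-, hx⟩ := hx
    obtain ⟨-, hy⟩ := hy
    ext <;> omega]
  congr 1
  ext n
  simp only [Set.mem_image, Set.mem_ofPred_eq, Set.mem_sdiff, cells, beta]
  constructor
  · rintro ⟨⟨m, n⟩, ⟨hm, rfl⟩, rfl⟩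
    dsimp only at hm ⊢
    omega
  · rintro ⟨hd, hn⟩
    refine ⟨((n + d).toNat, n), ⟨?_, ?_⟩, rfl⟩ <;> dsimp only <;> omega

section Strip

variable (a b t : ℕ)

/-- The parts left after removing the border strip running from the end of row `a` to
column `t` of row `b`, when `a ≤ b` and `λ_{b+2} ≤ t < λ_{b+1}` (rows counted from `0`):
between rows `a` and `b` each row is cut back to one less than the row below it, except
the last one, which is cut back to `t`. -/
def stripParts (r : ℕ) : ℕ :=
  if a ≤ r ∧ r ≤ b then max (lam.parts (r + 1) - 1) t else lam.parts r

def strip : Set (ℕ × ℕ) := {c | lam.stripParts a b t c.2 ≤ c.1 ∧ c.1 < lam.parts c.2}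

variable {lam a b t}

theorem mem_strip {m r : ℕ} :
    (m, r) ∈ lam.strip a b t ↔ lam.stripParts a b t r ≤ m ∧ m < lam.parts r :=
  Iff.rfl

theorem stripParts_of_not_mem {r : ℕ} (h : ¬(a ≤ r ∧ r ≤ b)) :
    lam.stripParts a b t r = lam.parts r := by
  simp [stripParts, h]

theorem stripParts_of_lt (ht' : t < lam.parts b) {r : ℕ} (har : a ≤ r) (hrb : r < b) :
    lam.stripParts a b t r = lam.parts (r + 1) - 1 := by
  have := lam.antitone (show r + 1 ≤ b by omega)
  simp only [stripParts, har, hrb.le, and_self, if_true]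
  omega

theorem stripParts_self (hab : a ≤ b) (ht : lam.parts (b + 1) ≤ t) :
    lam.stripParts a b t b = t := by
  simp only [stripParts, hab, le_refl, and_self, if_true]
  omega

theorem stripParts_lt (ht' : t < lam.parts b) {r : ℕ} (har : a ≤ r) (hrb : r ≤ b) :
    lam.stripParts a b t r < lam.parts r := by
  have := lam.antitone hrb
  have := lam.antitone (show r ≤ r + 1 by omega)
  simp only [stripParts, har, hrb, and_self, if_true]
  omega

theorem stripParts_le (ht' : t < lam.parts b) (r : ℕ) : lam.stripParts a b t r ≤ lam.parts r := by
  by_cases h : a ≤ r ∧ r ≤ b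
  · exact (stripParts_lt ht' h.1 h.2).le
  · exact (stripParts_of_not_mem h).le

theorem stripParts_antitone (hab : a ≤ b) (ht : lam.parts (b + 1) ≤ t) (ht' : t < lam.parts b) :
    Antitone (lam.stripParts a b t) := by
  refine antitone_nat_of_succ_le fun r => ?_
  by_cases hr : a ≤ r ∧ r ≤ b
  · by_cases hr' : a ≤ r + 1 ∧ r + 1 ≤ b
    · have := lam.antitone (show r + 1 ≤ r + 1 + 1 by omega)
      simp only [stripParts, hr, hr', and_self, if_true]
      omega
    · obtain rfl : r = b := by omega
      rw [stripParts_of_not_mem hr', stripParts_self hab ht]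
      exact ht
  · calc lam.stripParts a b t (r + 1) ≤ lam.parts (r + 1) := stripParts_le ht' _
      _ ≤ lam.parts r := lam.antitone (show r ≤ r + 1 by omega)
      _ = lam.stripParts a b t r := (stripParts_of_not_mem hr).symm

theorem mem_strip_rows {m r : ℕ} (h : (m, r) ∈ lam.strip a b t) : a ≤ r ∧ r ≤ b := by
  by_contra hr
  have := mem_strip.1 h
  rw [stripParts_of_not_mem hr] at this
  omega

theorem strip_eq_image :
    lam.strip a b t = ((Finset.Icc a b).sigma
      fun r => Finset.Ico (lam.stripParts a b t r) (lam.parts r)).image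
        (fun x => (x.2, x.1)) := by
  ext ⟨m, r⟩
  simp only [Finset.coe_image, Set.mem_image, Finset.mem_coe, Finset.mem_sigma,
    Finset.mem_Icc, Finset.mem_Ico, Sigma.exists, Prod.mk.injEq]
  constructor
  · intro h
    exact ⟨r, m, ⟨mem_strip_rows h, h⟩, rfl, rfl⟩
  · rintro ⟨r, m, ⟨-, h⟩, rfl, rfl⟩
    exact h

theorem ncard_strip (hab : a ≤ b) (ht : lam.parts (b + 1) ≤ t) (ht' : t < lam.parts b) :
    (lam.strip a b t).ncard = lam.parts a + (b - a) - t := by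
  rw [strip_eq_image, Set.ncard_coe_finset,
    Finset.card_image_of_injective _ fun x y h => by
      simp only [Prod.mk.injEq] at h; exact Sigma.ext h.2 (heq_of_eq h.1),
    Finset.card_sigma]
  simp only [Nat.card_Ico]
  zify [stripParts_le ht', lam.antitone hab, ht'.le.trans (lam.antitone hab)]
  rw [← Finset.Ico_insert_right hab, Finset.sum_insert Finset.right_notMem_Ico,
    stripParts_self hab ht]
  have hrow : ∀ r ∈ Finset.Ico a b, ((lam.parts r : ℤ) - (lam.stripParts a b t r : ℕ)) =
      ((lam.parts r : ℤ) - lam.parts (r + 1)) + 1 := fun r hr => by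
    rw [Finset.mem_Ico] at hr
    have := lam.antitone (show r + 1 ≤ b by omega)
    rw [stripParts_of_lt ht' hr.1 hr.2]
    omega
  have htele := Finset.sum_range_sub' (fun k => (lam.parts (a + k) : ℤ)) (b - a)
  simp only [← add_assoc, add_zero, Nat.add_sub_cancel' hab] at htele
  rw [Finset.sum_congr rfl hrow, Finset.sum_add_distrib, Finset.sum_Ico_eq_sum_range, htele]
  simp only [Finset.sum_const, Nat.card_Ico, nsmul_eq_mul, mul_one]
  have := ht'.trans_le (lam.antitone hab)
  omega

theorem strip_connectedIn (hab : a ≤ b) (ht : lam.parts (b + 1) ≤ t) (ht' : t < lam.parts b) :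
    ConnectedIn (lam.strip a b t) := by
  refine connectedIn_of_forall_reflTransGen (t, b) ?_
  suffices ∀ N, ∀ m r, (m, r) ∈ lam.strip a b t → m + (b - r) = N →
      Relation.ReflTransGen (fun x y => x ∈ lam.strip a b t ∧ y ∈ lam.strip a b t ∧ Adj x y)
        (m, r) (t, b) from fun x hx => this _ x.1 x.2 hx rfl
  intro N
  induction N using Nat.strong_induction_on with
  | _ N ih =>
    intro m r hmr hN
    obtain ⟨har, hrb⟩ := mem_strip_rows hmr
    obtain ⟨hm₁, hm₂⟩ := mem_strip.1 hmr
    rcases Nat.lt_or_ge (lam.stripParts a b t r) m with hm | hm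
    · have hleft : (m - 1, r) ∈ lam.strip a b t := mem_strip.2 ⟨by omega, by omega⟩
      exact .head ⟨hmr, hleft, Or.inr ⟨rfl, Or.inl (by omega)⟩⟩ (ih _ (by omega) _ _ hleft rfl)
    rcases Nat.lt_or_ge r b with hrb' | hrb'
    · -- the first box of row `r` sits right above the last box of row `r + 1`
      have hm' : m = lam.parts (r + 1) - 1 := by
        have := stripParts_of_lt ht' har hrb'
        omega
      have hdown : (m, r + 1) ∈ lam.strip a b t := by
        have := stripParts_antitone hab ht ht' (show r ≤ r + 1 by omega)
        have := stripParts_lt ht' (show a ≤ r + 1 by omega) (show r + 1 ≤ b by omega)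
        exact mem_strip.2 ⟨by omega, by omega⟩
      exact .head ⟨hmr, hdown, Or.inl ⟨rfl, Or.inr rfl⟩⟩ (ih _ (by omega) _ _ hdown rfl)
    · obtain rfl : r = b := by omega
      obtain rfl : m = t := by rw [stripParts_self hab ht] at hm₁ hm; omega
      exact .refl

theorem strip_not_hasSquare (ht' : t < lam.parts b) : ¬ HasSquare (lam.strip a b t) := by
  rintro ⟨m, r, h₀₀, -, h₀₁, h₁₁⟩
  have har := (mem_strip_rows h₀₀).1
  have hrb := (mem_strip_rows h₀₁).2
  have := stripParts_of_lt ht' har (show r < b by omega)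
  have := (mem_strip.1 h₀₀).1
  have := (mem_strip.1 h₁₁).2
  omega

theorem isRimHook_strip (hab : a ≤ b) (ht : lam.parts (b + 1) ≤ t) (ht' : t < lam.parts b) :
    IsRimHook (lam.parts a + (b - a) - t) lam (lam.strip a b t) := by
  refine ⟨fun c hc => hc.2, ?_, ncard_strip hab ht ht', strip_connectedIn hab ht ht',
    strip_not_hasSquare ht', ?_⟩
  · rw [strip_eq_image]
    exact Finset.finite_toSet _
  · obtain ⟨R, hR⟩ := lam.eventually_zero
    refine ⟨⟨lam.stripParts a b t, fun m n h => stripParts_antitone hab ht ht' h,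
      ⟨max R (b + 1), fun n hn => ?_⟩⟩, ?_⟩
    · rw [stripParts_of_not_mem (by omega)]
      exact hR n (le_of_max_le_left hn)
    · ext ⟨m, r⟩
      have := stripParts_le (a := a) ht' r
      show m < lam.stripParts a b t r ↔
        m < lam.parts r ∧ ¬(lam.stripParts a b t r ≤ m ∧ m < lam.parts r)
      omega

end Strip

variable {lam}

/-- A bead `x` of the Maya diagram whose position `x - l` is free can be moved there; the
boxes this removes form a rim hook of length `l`. -/
theorem exists_isRimHook_of_sub_notMem_range_beta {l : ℕ} (hl : 0 < l) {a : ℕ}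
    (h : lam.beta a - l ∉ Set.range lam.beta) : ∃ H, IsRimHook l lam H := by
  classical
  have hex := lam.exists_beta_lt (lam.beta a - l)
  have hfind : lam.beta (Nat.find hex) < lam.beta a - l := Nat.find_spec hex
  obtain ⟨b, hfb⟩ : ∃ b, Nat.find hex = b + 1 :=
    Nat.exists_eq_succ_of_ne_zero fun h0 => by
      have := lam.beta_strictAnti.antitone (Nat.zero_le a)
      rw [h0] at hfind
      omega
  have hab : a ≤ b := by
    by_contra! hlt
    have := lam.beta_strictAnti.antitone (show b + 1 ≤ a by omega)
    rw [hfb] at hfind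
    omega
  have hb : lam.beta a - l < lam.beta b := by
    have hmin := Nat.find_min hex (show b < Nat.find hex by omega)
    exact lt_of_le_of_ne (not_lt.1 hmin) fun he => h ⟨b, he.symm⟩
  rw [hfb] at hfind
  have := lam.neg_succ_le_beta (b + 1)
  simp only [beta] at hb hfind this
  set t := (lam.parts a - ((a : ℤ) + 1) - l + b + 1).toNat
  have hlen : lam.parts a + (b - a) - t = l := by omega
  have ht : lam.parts (b + 1) ≤ t := by omega
  have ht' : t < lam.parts b := by omega
  exact ⟨_, hlen ▸ isRimHook_strip hab ht ht'⟩

end Partition'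

theorem contentCount_eq_sum_diagCount {l : ℕ} (hl : 0 < l) (lam : Partition') (r : ℤ)
    {K : Finset ℤ} (hK : ∀ c ∈ lam.cells, ∀ k : ℤ, (c.1 : ℤ) - c.2 = l * k + r → k ∈ K) :
    contentCount l lam r = ∑ k ∈ K, diagCount lam (l * k + r) := by
  have hl' : (l : ℤ) ≠ 0 := by exact_mod_cast hl.ne'
  have hcontent : ∀ x k : ℤ, x ≡ r [ZMOD l] ∧ (x - r) / l = k ↔ x = l * k + r := by
    refine fun x k => ⟨fun ⟨hmod, hk⟩ => ?_, fun hx => ⟨?_, ?_⟩⟩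
    · rw [← hk, Int.mul_ediv_cancel' (Int.ModEq.dvd hmod.symm)]
      ring
    · exact Int.modEq_iff_dvd.2 ⟨-k, by rw [hx]; ring⟩
    · rw [hx, add_sub_cancel_right, Int.mul_ediv_cancel_left k hl']
  set S := {c : ℕ × ℕ | c ∈ lam.cells ∧ ((c.1 : ℤ) - c.2) ≡ r [ZMOD l]}
  have hS : ∀ c ∈ S, ((c.1 : ℤ) - c.2 - r) / l ∈ K := fun c ⟨hc, hmod⟩ =>
    hK c hc _ ((hcontent _ _).1 ⟨hmod, rfl⟩)
  rw [contentCount, Set.ncard_eq_sum_ncard_fiberwise (lam.cells_finite.subset fun c hc => hc.1) hS]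
  refine Finset.sum_congr rfl fun k _ => congrArg Set.ncard (Set.ext fun c => ?_)
  exact and_assoc.trans (and_congr_right fun _ => hcontent _ _)

namespace IsLCore

variable {l : ℕ} {lam : Partition'} {p : Fin l → ℤ}

theorem sub_mem_range_beta (hl : 0 < l) (hcore : IsLCore l lam) {x : ℤ}
    (hx : x ∈ Set.range lam.beta) : x - l ∈ Set.range lam.beta := by
  by_contra h
  obtain ⟨a, rfl⟩ := hx
  exact hcore (Partition'.exists_isRimHook_of_sub_notMem_range_beta hl h)

theorem mul_add_mem_range_beta_iff (hl : 0 < l) (hcore : IsLCore l lam) {i : ℕ} {c : ℤ}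
    (hc : IsCharge (quotSeq l lam i) c) (q : ℤ) :
    (l : ℤ) * q + i ∈ Set.range lam.beta ↔ q < c := by
  have hzero : ∀ q, ¬quotSeq l lam i q ↔ (l : ℤ) * q + i ∈ Set.range lam.beta := by
    simp [quotSeq, Partition'.maya_iff]
  rw [← hzero]
  refine hc.not_iff_lt (fun x hx => ?_) q
  rw [hzero] at hx ⊢
  convert hcore.sub_mem_range_beta hl hx using 1
  ring

theorem diagCount_eq (hl : 0 < l) (hcore : IsLCore l lam)
    (hp : ∀ i : Fin l, IsCharge (quotSeq l lam i) (p i)) (d : ℤ) :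
    (diagCount lam d : ℤ) =
      ∑ i : Fin l, (((p i + ((i : ℕ) - d) / l).toNat : ℤ) - (((i : ℕ) - d) / l).toNat) := by
  have h := lam.diagCount_add_ncard_Iio_inter_Ici d
  rw [ncard_inter_Ici_eq_sum_toNat hl (fun i => hcore.mul_add_mem_range_beta_iff hl (hp i)),
    ncard_inter_Ici_eq_sum_toNat hl (p := 0) mul_add_mem_Iio_zero_iff] at h
  have hZ := congrArg (Nat.cast : ℕ → ℤ) h
  push_cast at hZ
  simp only [Pi.zero_apply, zero_add] at hZ
  rw [Finset.sum_sub_distrib]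
  linarith

/-- Once `M` is large, the diagonals `l * k - j` with `-M ≤ k < M` carry every box of
content `≡ -j`. -/
theorem eventually_two_mul_contentCount_eq (hl : 0 < l) (hcore : IsLCore l lam)
    (hp : ∀ i : Fin l, IsCharge (quotSeq l lam i) (p i)) {j : ℕ} (hj : j < l) :
    ∃ M₀ : ℤ, ∀ M ≥ M₀, 2 * (contentCount l lam (-j) : ℤ) =
      ∑ i, (p i ^ 2 + 2 * if l - j ≤ (i : ℕ) then p i else 0) + (2 * M + 1) * ∑ i, p i := by
  obtain ⟨N, hN⟩ := lam.exists_cells_subset_Iio_prod_Iio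
  have hbound : ∀ i, |p i| ≤ ∑ i, |p i| := fun i =>
    Finset.single_le_sum (fun i _ => abs_nonneg (p i)) (Finset.mem_univ i)
  have hnonneg : 0 ≤ ∑ i, |p i| := Finset.sum_nonneg fun i _ => abs_nonneg (p i)
  refine ⟨N + 1 + ∑ i, |p i|, fun M hM => ?_⟩
  have hK : ∀ c ∈ lam.cells, ∀ k : ℤ, (c.1 : ℤ) - c.2 = l * k + -j → k ∈ Finset.Ico (-M) M := by
    intro c hc k hk
    obtain ⟨h₁, h₂⟩ := hN hc
    simp only [Set.mem_Iio] at h₁ h₂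
    rw [Finset.mem_Ico]
    constructor <;> nlinarith
  rw [contentCount_eq_sum_diagCount hl lam _ hK, Nat.cast_sum, Finset.mul_sum]
  simp only [hcore.diagCount_eq hl hp, sub_mul_add_neg_ediv_eq (Fin.isLt _) hj, ← add_sub_assoc,
    Finset.mul_sum]
  rw [Finset.sum_comm, ← Finset.sum_add_distrib]
  refine Finset.sum_congr rfl fun i _ => ?_
  have hpi := abs_le.1 (hbound i)
  simp only [mul_sub, Finset.sum_sub_distrib, ← Finset.mul_sum]
  split_ifs <;>
    rw [two_mul_sum_Ico_toNat_sub (by linarith) (by linarith),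
      two_mul_sum_Ico_toNat_sub (by linarith) (by linarith)] <;>
    ring

end IsLCore

/-- Let `l ≥ 2` and let `λ` be an `l`-core with quotient charges `p_i`.
Then for every `0 ≤ j ≤ l−1`, the number of boxes of `λ` of content `≡ −j (mod l)` equals
`(1/2)·∑_{i=0}^{l−1} p_i² + ∑_{i=l−j}^{l−1} p_i` (the second sum empty when `j = 0`). -/
theorem lcore_content_count_formula (l : ℕ) (hl : 2 ≤ l) (lam : Partition')
    (hcore : IsLCore l lam)
    (p : Fin l → ℤ) (hp : ∀ i : Fin l, IsCharge (quotSeq l lam i) (p i))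
    (j : ℕ) (hj : j < l) :
    (contentCount l lam (-(j : ℤ)) : ℚ) =
      (∑ i, (p i : ℚ) ^ 2) / 2 +
        ∑ i ∈ Finset.univ.filter (fun i : Fin l => l - j ≤ (i : ℕ)), (p i : ℚ) := by
  obtain ⟨M, hM⟩ := hcore.eventually_two_mul_contentCount_eq (by omega) hp hj
  -- only the term `(2M + 1) ∑ p i` depends on `M`
  have hsum : ∑ i, p i = 0 := by
    have := hM M le_rfl
    have := hM (M + 1) (by linarith)
    linarith
  have h := hM M le_rfl
  rw [hsum, mul_zero, add_zero, Finset.sum_add_distrib, ← Finset.mul_sum,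
    ← Finset.sum_filter] at h
  have hq := congrArg (Int.cast : ℤ → ℚ) h
  push_cast at hq
  linarith
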